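/- Let d ≥ 2, let R > 0, let ε, δ > 0, and let P(x,y) = y²/2 + (δ/2)(Σ_{j=1}^d a_j x_j² − y²) where a_j > 0 and Σ a_j = 1. Suppose U solves the classical obstacle problem ΔU = χ_{U>0}, U ≥ 0 in B_R ⊂ R^{d+1} = R^d × R, and U ≤ P − ε on ∂B_R. Then U(ξ, 0) = 0 for every ξ ∈ R^d with |ξ_j| ≤ ε/(δR) for all j; in particular the contact set {U = 0} contains B_{ε/(δR)} ∩ {y = 0}. -/

import Mathlib

open MeasureTheory Metric Filter Topology

noncomputable section

abbrev Euc (n : ℕ) : Type := EuclideanSpace ℝ (Fin n)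

def toE {n : ℕ} (f : Fin n → ℝ) : Euc n := WithLp.toLp 2 f

def SubharmonicOnSet {n : ℕ} (u : Euc n → ℝ) (s : Set (Euc n)) : Prop :=
  ContinuousOn u s ∧
    ∀ x r, 0 < r → closedBall x r ⊆ s → u x ≤ ⨍ y in ball x r, u y ∂volume

def SuperharmonicOnSet {n : ℕ} (u : Euc n → ℝ) (s : Set (Euc n)) : Prop :=
  ContinuousOn u s ∧
    ∀ x r, 0 < r → closedBall x r ⊆ s → (⨍ y in ball x r, u y ∂volume) ≤ u x

def HarmonicOnSet {n : ℕ} (u : Euc n → ℝ) (s : Set (Euc n)) : Prop :=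
  ContinuousOn u s ∧
    ∀ x r, 0 < r → closedBall x r ⊆ s → (⨍ y in ball x r, u y ∂volume) = u x

def reflLast (d : ℕ) (X : Euc (d+1)) : Euc (d+1) :=
  toE (Function.update (fun i => X i) (Fin.last d) (-(X (Fin.last d))))

def IsThinObstacleSolution (d : ℕ) (u : Euc (d+1) → ℝ) : Prop :=
  Continuous u ∧
  (∀ X : Euc (d+1), X (Fin.last d) = 0 → 0 ≤ u X) ∧
  (∀ X, u (reflLast d X) = u X) ∧
  SuperharmonicOnSet u Set.univ ∧
  HarmonicOnSet u ({X : Euc (d+1) | X (Fin.last d) ≠ 0} ∪ {X | 0 < u X})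

def contactSet (d : ℕ) (u : Euc (d+1) → ℝ) : Set (Euc (d+1)) :=
  {X | u X = 0 ∧ X (Fin.last d) = 0}

def IsObstacleSolutionOn (d : ℕ) (U : Euc (d+1) → ℝ) (s : Set (Euc (d+1))) : Prop :=
  ContinuousOn U s ∧ (∀ X ∈ s, 0 ≤ U X) ∧
  SubharmonicOnSet U s ∧
  SuperharmonicOnSet (fun X => U X - ‖X‖^2 / (2*((d:ℝ)+1))) s ∧
  HarmonicOnSet (fun X => U X - ‖X‖^2 / (2*((d:ℝ)+1))) (s ∩ {X | 0 < U X})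

def IsObstacleSolution (d : ℕ) (U : Euc (d+1) → ℝ) : Prop :=
  IsObstacleSolutionOn d U Set.univ

def QuadGrowth (d : ℕ) (u : Euc (d+1) → ℝ) : Prop :=
  ∃ C : ℝ, ∀ X : Euc (d+1), |u X| ≤ C * (‖X‖^2 + 1)

def sphereInt (d : ℕ) (u : Euc (d+1) → ℝ) (r : ℝ) : ℝ :=
  ∫ X in sphere (0 : Euc (d+1)) r, (u X)^2 ∂μH[(d : ℝ)]

def frequency (d : ℕ) (u : Euc (d+1) → ℝ) (r : ℝ) : ℝ :=
  r * (∫ X in ball (0 : Euc (d+1)) r, ‖gradient u X‖^2 ∂volume) / sphereInt d u r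

def newtonPot (d : ℕ) (A : Set (Euc (d+1))) (X : Euc (d+1)) : ℝ :=
  (1 / (((d:ℝ)+1) * ((d:ℝ)-1) * (volume (ball (0 : Euc (d+1)) 1)).toReal)) *
    ∫ Y in A, ‖X - Y‖ ^ ((1:ℝ) - (d:ℝ)) ∂volume

def thinEllipsoid (d : ℕ) (ℓ : Fin d → ℝ) : Set (Euc (d+1)) :=
  {X : Euc (d+1) | (∑ j : Fin d, (X (Fin.castSucc j))^2 / (ℓ j)^2) ≤ 1 ∧ X (Fin.last d) = 0}

def Wlin (d : ℕ) (U : Euc (d+1) → ℝ) (X : Euc (d+1)) : ℝ :=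
  U X - (X (Fin.last d))^2 / 2

def hatW (d : ℕ) (U : Euc (d+1) → ℝ) (X : Euc (d+1)) : ℝ :=
  Wlin d U X / Real.sqrt (sphereInt d (Wlin d U) 1)

def lap (d : ℕ) (φ : Euc (d+1) → ℝ) (X : Euc (d+1)) : ℝ :=
  ∑ i : Fin (d+1),
    fderiv ℝ (fun Y => fderiv ℝ φ Y (EuclideanSpace.single i 1)) X (EuclideanSpace.single i 1)

def polyEval (d : ℕ) (p : MvPolynomial (Fin (d+1)) ℝ) (X : Euc (d+1)) : ℝ :=
  MvPolynomial.eval (fun i => X i) p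

/-!
Let `Q_ξ` be the polynomial solution translated by `(ξ, 0)`. It vanishes at `(ξ, 0)`, is
nonnegative once `δ ≤ 1`, and `Q_ξ - ‖X‖² / (2(d+1))` is a trace-free quadratic, hence has the
mean value property. So `U - Q_ξ` has the mean value property on `B_R ∩ {U > 0}` and is `≤ 0` on
the rest of `B_R`, and the maximum principle gives `U ≤ Q_ξ` on the closed ball as soon as
`U ≤ Q_ξ` on `∂B_R`. There `P - Q_ξ = δ Σ a_j ξ_j (x_j - ξ_j / 2) ≤ δ R Σ a_j |ξ_j| ≤ ε`, so the
boundary hypothesis suffices, and `0 ≤ U(ξ, 0) ≤ Q_ξ(ξ, 0) = 0`.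
-/

open Set

lemma ContinuousOn.integrableOn_ball {α : Type*} [MetricSpace α] [ProperSpace α]
    [MeasurableSpace α] [OpensMeasurableSpace α] {μ : Measure α} [IsFiniteMeasureOnCompacts μ]
    {f : α → ℝ} {x : α} {r : ℝ} (hf : ContinuousOn f (closedBall x r)) :
    IntegrableOn f (ball x r) μ :=
  (hf.integrableOn_compact (isCompact_closedBall x r)).mono_set ball_subset_closedBall

lemma eqOn_of_le_of_setAverage_eq {α : Type*} [TopologicalSpace α] [MeasurableSpace α]
    [OpensMeasurableSpace α] {μ : Measure α} [μ.IsOpenPosMeasure] {s : Set α} (hs : IsOpen s)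
    (hμs : μ s ≠ ⊤) {f : α → ℝ} {M : ℝ} (hf : ContinuousOn f s) (hfi : IntegrableOn f s μ)
    (hle : ∀ y ∈ s, f y ≤ M) (havg : ⨍ y in s, f y ∂μ = M) : EqOn f (fun _ => M) s := by
  have hM : IntegrableOn (fun _ => M) s μ := integrableOn_const hμs
  have hzero : ∫ y in s, (M - f y) ∂μ = 0 := by
    rw [integral_sub hM hfi, setIntegral_const, ← measure_smul_setAverage f hμs, havg, sub_self]
  have hae := (setIntegral_eq_zero_iff_of_nonneg_ae
    ((ae_restrict_iff' hs.measurableSet).mpr (ae_of_all _ fun y hy => sub_nonneg.mpr (hle y hy)))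
    (hM.sub hfi)).mp hzero
  intro y hy
  have := Measure.eqOn_open_of_ae_eq hae hs (continuousOn_const.sub hf) continuousOn_const hy
  simpa [sub_eq_zero, eq_comm] using this

section Euclidean

variable {n : ℕ}

lemma HarmonicOnSet.mono {u : Euc n → ℝ} {s t : Set (Euc n)} (hu : HarmonicOnSet u t)
    (hst : s ⊆ t) : HarmonicOnSet u s :=
  ⟨hu.1.mono hst, fun x r hr hxr => hu.2 x r hr (hxr.trans hst)⟩

lemma HarmonicOnSet.sub {u v : Euc n → ℝ} {s : Set (Euc n)} (hu : HarmonicOnSet u s)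
    (hv : HarmonicOnSet v s) : HarmonicOnSet (fun x => u x - v x) s := by
  refine ⟨hu.1.sub hv.1, fun x r hr hxr => ?_⟩
  rw [setAverage_eq, integral_sub (hu.1.mono hxr).integrableOn_ball
    (hv.1.mono hxr).integrableOn_ball, smul_sub, ← setAverage_eq, ← setAverage_eq,
    hu.2 x r hr hxr, hv.2 x r hr hxr]

theorem HarmonicOnSet.nonpos_of_nonpos_on_diff {W : Euc n → ℝ} {Ω K : Set (Euc n)}
    (hW : HarmonicOnSet W Ω) (hΩ : IsOpen Ω) (hK : IsCompact K) (hΩK : Ω ⊆ K)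
    (hΩc : Ωᶜ.Nonempty) (hWK : ContinuousOn W K) (hbd : ∀ x ∈ K \ Ω, W x ≤ 0) :
    ∀ x ∈ K, W x ≤ 0 := by
  intro x hx
  obtain ⟨x₀, hx₀K, hmax⟩ := hK.exists_isMaxOn ⟨x, hx⟩ hWK
  refine (hmax hx).trans ?_
  by_cases hx₀ : x₀ ∈ Ω
  swap
  · exact hbd x₀ ⟨hx₀K, hx₀⟩
  set ρ := infDist x₀ Ωᶜ
  have hρ : 0 < ρ := (hΩ.isClosed_compl.notMem_iff_infDist_pos hΩc).mp (not_not.mpr hx₀)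
  have hballΩ : ball x₀ ρ ⊆ Ω := by simpa using ball_infDist_compl_subset (s := Ω) (x := x₀)
  have hconst : ∀ y ∈ ball x₀ ρ, W x₀ ≤ W y := by
    intro y hy
    obtain ⟨r, hyr, hrρ⟩ := exists_between (mem_ball.mp hy)
    have hr : 0 < r := dist_nonneg.trans_lt hyr
    have hcb : closedBall x₀ r ⊆ Ω := (closedBall_subset_ball hrρ).trans hballΩ
    have hWr : ContinuousOn W (closedBall x₀ r) := hWK.mono (hcb.trans hΩK)
    exact (eqOn_of_le_of_setAverage_eq isOpen_ball measure_ball_lt_top.ne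
      (hWr.mono ball_subset_closedBall) hWr.integrableOn_ball
      (fun z hz => hmax (hΩK (hcb (ball_subset_closedBall hz)))) (hW.2 x₀ r hr hcb)
      (mem_ball.mpr hyr)).ge
  obtain ⟨z, hzΩ, hzρ⟩ := hΩ.isClosed_compl.exists_infDist_eq_dist hΩc x₀
  have hz : z ∈ closure (ball x₀ ρ) := by
    rw [closure_ball x₀ hρ.ne', mem_closedBall, dist_comm]
    exact hzρ.ge
  have hclK : closure (ball x₀ ρ) ⊆ K := closure_minimal (hballΩ.trans hΩK) hK.isClosed
  exact (le_on_closure hconst continuousOn_const (hWK.mono hclK) hz).trans (hbd z ⟨hclK hz, hzΩ⟩)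

lemma setIntegral_ball_zero_comp_linearIsometryEquiv (e : Euc n ≃ₗᵢ[ℝ] Euc n) (f : Euc n → ℝ)
    (r : ℝ) : ∫ z in ball (0 : Euc n) r, f (e z) = ∫ z in ball (0 : Euc n) r, f z := by
  have hpre : e ⁻¹' ball 0 r = ball 0 r := by ext z; simp
  have := e.measurePreserving.setIntegral_preimage_emb e.toHomeomorph.measurableEmbedding f
    (ball 0 r)
  rwa [hpre] at this

lemma setIntegral_ball_zero_apply (i : Fin n) (r : ℝ) : ∫ z in ball (0 : Euc n) r, z i = 0 := by
  have h := setIntegral_ball_zero_comp_linearIsometryEquiv (.neg ℝ) (fun z : Euc n => z i) r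
  simp only [LinearIsometryEquiv.coe_neg, PiLp.neg_apply, integral_neg] at h
  linarith

lemma setIntegral_ball_zero_sq_apply (i k : Fin n) (r : ℝ) :
    ∫ z in ball (0 : Euc n) r, z i ^ 2 = ∫ z in ball (0 : Euc n) r, z k ^ 2 := by
  rw [← setIntegral_ball_zero_comp_linearIsometryEquiv
    (LinearIsometryEquiv.piLpCongrLeft 2 ℝ ℝ (Equiv.swap i k))]
  simp

lemma setAverage_ball_eq_setAverage_ball_zero (f : Euc n → ℝ) (x : Euc n) (r : ℝ) :
    ⨍ y in ball x r, f y = ⨍ z in ball (0 : Euc n) r, f (x + z) := by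
  have hpre : (x + ·) ⁻¹' ball x r = ball (0 : Euc n) r := by ext z; simp
  rw [setAverage_eq, setAverage_eq, measureReal_def, measureReal_def,
    Measure.addHaar_ball_center volume x, ← hpre,
    (measurePreserving_add_left volume x).setIntegral_preimage_emb
      (Homeomorph.addLeft x).measurableEmbedding]

/- Centred at `x`, the linear terms average to zero by `z ↦ -z`, and the `z_i ^ 2` all have the
same average by permuting coordinates, so `∑ i, c i = 0` kills the quadratic part. -/
theorem harmonicOnSet_quadratic (c b : Fin n → ℝ) (e : ℝ) (hc : ∑ i, c i = 0) :
    HarmonicOnSet (fun y : Euc n => ∑ i, (c i * y i ^ 2 + b i * y i) + e) univ := by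
  refine ⟨by fun_prop, fun x r hr _ => ?_⟩
  set q : Euc n → ℝ := fun y => ∑ i, (c i * y i ^ 2 + b i * y i) + e
  set β : Fin n → ℝ := fun i => 2 * c i * x i + b i
  set g : Euc n → ℝ := fun z => ∑ i, (c i * z i ^ 2 + β i * z i)
  have hq : ∀ z, q (x + z) = q x + g z := by
    intro z
    simp only [q, g, β, PiLp.add_apply]
    rw [add_right_comm _ e, ← Finset.sum_add_distrib]
    congr 1
    exact Finset.sum_congr rfl fun i _ => by ring
  have hint : ∀ f : Euc n → ℝ, Continuous f → IntegrableOn f (ball 0 r) :=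
    fun f hf => hf.continuousOn.integrableOn_ball
  have hterm : ∀ i, ∫ z in ball (0 : Euc n) r, (c i * z i ^ 2 + β i * z i)
      = c i * ∫ z in ball (0 : Euc n) r, z i ^ 2 := by
    intro i
    rw [integral_add (hint _ (by fun_prop)) (hint _ (by fun_prop)), integral_const_mul,
      integral_const_mul, setIntegral_ball_zero_apply, mul_zero, add_zero]
  have hg : ∫ z in ball (0 : Euc n) r, g z = 0 := by
    rw [integral_finsetSum _ fun i _ => hint _ (by fun_prop)]
    simp_rw [hterm]
    cases n with
    | zero => simp
    | succ m => simp_rw [setIntegral_ball_zero_sq_apply _ 0, ← Finset.sum_mul, hc, zero_mul]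
  rw [setAverage_ball_eq_setAverage_ball_zero q]
  simp_rw [hq]
  rw [setAverage_eq, integral_add (hint _ continuous_const) (hint g (by fun_prop)), hg,
    add_zero, ← setAverage_eq, setAverage_const (measure_ball_pos volume 0 hr).ne'
    measure_ball_lt_top.ne]

end Euclidean

def polynomialSolution (d : ℕ) (δ : ℝ) (a ξ : Fin d → ℝ) (X : Euc (d + 1)) : ℝ :=
  X (Fin.last d) ^ 2 / 2
    + δ / 2 * ((∑ j, a j * (X (Fin.castSucc j) - ξ j) ^ 2) - X (Fin.last d) ^ 2)

section PolynomialSolution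

variable {d : ℕ} {δ : ℝ} {a ξ : Fin d → ℝ}

theorem harmonicOnSet_polynomialSolution_sub (hsum : ∑ j, a j = 1) :
    HarmonicOnSet (fun X => polynomialSolution d δ a ξ X - ‖X‖ ^ 2 / (2 * ((d : ℝ) + 1))) univ := by
  set κ : ℝ := 1 / (2 * ((d : ℝ) + 1))
  set c : Fin (d + 1) → ℝ := Fin.snoc (fun j => δ / 2 * a j - κ) ((1 - δ) / 2 - κ)
  have hc : ∑ i, c i = 0 := by
    simp only [c, Fin.sum_univ_castSucc, Fin.snoc_castSucc, Fin.snoc_last, Finset.sum_sub_distrib,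
      ← Finset.mul_sum, hsum, Finset.sum_const, Finset.card_univ, Fintype.card_fin, nsmul_eq_mul, κ]
    field_simp
    ring
  convert harmonicOnSet_quadratic c (Fin.snoc (fun j => -(δ * a j * ξ j)) 0)
    (δ / 2 * ∑ j, a j * ξ j ^ 2) hc using 2 with X
  simp only [polynomialSolution, EuclideanSpace.norm_sq_eq, Fin.sum_univ_castSucc, c,
    Fin.snoc_castSucc, Fin.snoc_last, Real.norm_eq_abs, sq_abs]
  rw [Finset.sum_congr rfl fun j _ => (by ring : (δ / 2 * a j - κ) * X (Fin.castSucc j) ^ 2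
      + -(δ * a j * ξ j) * X (Fin.castSucc j) = δ / 2 * (a j * (X (Fin.castSucc j) - ξ j) ^ 2)
        - κ * X (Fin.castSucc j) ^ 2 - δ / 2 * (a j * ξ j ^ 2)),
    Finset.sum_sub_distrib, Finset.sum_sub_distrib, ← Finset.mul_sum, ← Finset.mul_sum,
    ← Finset.mul_sum]
  ring

lemma polynomialSolution_nonneg (ha : ∀ j, 0 ≤ a j) (hδ₀ : 0 ≤ δ) (hδ₁ : δ ≤ 1) (X : Euc (d + 1)) :
    0 ≤ polynomialSolution d δ a ξ X := by
  have hS : 0 ≤ ∑ j, a j * (X (Fin.castSucc j) - ξ j) ^ 2 :=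
    Finset.sum_nonneg fun j _ => mul_nonneg (ha j) (sq_nonneg _)
  rw [polynomialSolution]
  nlinarith [mul_nonneg hδ₀ hS, mul_nonneg (sub_nonneg.mpr hδ₁) (sq_nonneg (X (Fin.last d)))]

@[simp]
lemma polynomialSolution_snoc_self : polynomialSolution d δ a ξ (toE (Fin.snoc ξ 0)) = 0 := by
  simp [polynomialSolution, toE]

lemma polynomialSolution_zero_single_last (R : ℝ) :
    polynomialSolution d δ a 0 (EuclideanSpace.single (Fin.last d) R) = (1 - δ) / 2 * R ^ 2 := by
  simp [polynomialSolution, (Fin.castSucc_lt_last _).ne]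
  ring

lemma polynomialSolution_zero_single_castSucc (j : Fin d) (R : ℝ) :
    polynomialSolution d δ a 0 (EuclideanSpace.single (Fin.castSucc j) R)
      = δ / 2 * a j * R ^ 2 := by
  simp [polynomialSolution, (Fin.castSucc_lt_last _).ne']
  ring

lemma polynomialSolution_zero_le_add (ha : ∀ j, 0 ≤ a j) (hsum : ∑ j, a j = 1) (hδ : 0 ≤ δ)
    {X : Euc (d + 1)} {R ε : ℝ} (hX : ‖X‖ ≤ R) (hξ : ∀ j, |ξ j| * (δ * R) ≤ ε) :
    polynomialSolution d δ a 0 X ≤ polynomialSolution d δ a ξ X + ε := by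
  have hterm : ∀ j, δ / 2 * (a j * X (Fin.castSucc j) ^ 2)
      ≤ δ / 2 * (a j * (X (Fin.castSucc j) - ξ j) ^ 2) + a j * ε := by
    intro j
    have hXj : |X (Fin.castSucc j)| ≤ R := (PiLp.norm_apply_le X _).trans hX
    have hXξ : δ * (X (Fin.castSucc j) * ξ j) ≤ |ξ j| * (δ * R) := by
      have := mul_le_mul_of_nonneg_right hXj (abs_nonneg (ξ j))
      rw [← abs_mul] at this
      nlinarith [le_abs_self (X (Fin.castSucc j) * ξ j)]
    nlinarith [mul_le_mul_of_nonneg_left hXξ (ha j), mul_le_mul_of_nonneg_left (hξ j) (ha j),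
      mul_nonneg (mul_nonneg (ha j) hδ) (sq_nonneg (ξ j))]
  have := Finset.sum_le_sum fun j (_ : j ∈ Finset.univ) => hterm j
  rw [Finset.sum_add_distrib, ← Finset.sum_mul, hsum, ← Finset.mul_sum, ← Finset.mul_sum] at this
  simp only [polynomialSolution, Pi.zero_apply, sub_zero]
  linarith

end PolynomialSolution

theorem IsObstacleSolutionOn.le_of_le_on_sphere {d : ℕ} {U Q : Euc (d + 1) → ℝ} {R : ℝ}
    (hU : IsObstacleSolutionOn d U (ball 0 R)) (hUc : ContinuousOn U (closedBall 0 R))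
    (hQ : HarmonicOnSet (fun X => Q X - ‖X‖ ^ 2 / (2 * ((d : ℝ) + 1))) univ)
    (hQ₀ : ∀ X, 0 ≤ Q X) (hUQ : ∀ X ∈ sphere 0 R, U X ≤ Q X) :
    ∀ X ∈ closedBall 0 R, U X ≤ Q X := by
  set Ω := ball (0 : Euc (d + 1)) R ∩ {X | 0 < U X}
  have hΩ : IsOpen Ω := hU.1.isOpen_inter_preimage isOpen_ball isOpen_Ioi
  have hW : HarmonicOnSet (fun X => U X - Q X) Ω := by
    convert hU.2.2.2.2.sub (hQ.mono (subset_univ Ω)) using 2 with X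
    ring
  have hQc : Continuous Q := ((continuousOn_univ.mp hQ.1).add (by fun_prop :
    Continuous fun X : Euc (d + 1) => ‖X‖ ^ 2 / (2 * ((d : ℝ) + 1)))).congr
    fun X => sub_add_cancel _ _
  obtain ⟨Y, hY⟩ := NormedSpace.exists_lt_norm ℝ (Euc (d + 1)) R
  have hYΩ : Y ∈ Ωᶜ := fun h => (mem_ball_zero_iff.mp h.1).not_gt hY
  refine fun X hX => sub_nonpos.mp (hW.nonpos_of_nonpos_on_diff hΩ (isCompact_closedBall 0 R)
    (inter_subset_left.trans ball_subset_closedBall) ⟨Y, hYΩ⟩ (hUc.sub hQc.continuousOn) ?_ X hX)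
  rintro X ⟨hXK, hXΩ⟩
  by_cases hXb : X ∈ ball (0 : Euc (d + 1)) R
  · have hUX : U X ≤ 0 := not_lt.mp fun h => hXΩ ⟨hXb, h⟩
    linarith [hQ₀ X]
  · have hXs : X ∈ sphere (0 : Euc (d + 1)) R := by
      rw [← closedBall_sdiff_ball]
      exact ⟨hXK, hXb⟩
    linarith [hUQ X hXs]

lemma norm_toE_snoc_zero_le {d : ℕ} {a ξ : Fin d → ℝ} {R : ℝ} (ha : ∀ j, 0 ≤ a j)
    (hsum : ∑ j, a j = 1) (hR : 0 ≤ R) (hξ : ∀ j, |ξ j| ≤ a j * R) :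
    ‖toE (Fin.snoc ξ 0 : Fin (d + 1) → ℝ)‖ ≤ R := by
  have hterm : ∀ j, ξ j ^ 2 ≤ a j * R ^ 2 := by
    intro j
    have ha₁ : a j ≤ 1 := hsum ▸ Finset.single_le_sum (fun i _ => ha i) (Finset.mem_univ j)
    have := sq_le_sq' (neg_le_of_abs_le (hξ j)) (le_of_abs_le (hξ j))
    nlinarith [mul_nonneg (ha j) (sq_nonneg R)]
  have hsq : ‖toE (Fin.snoc ξ 0 : Fin (d + 1) → ℝ)‖ ^ 2 ≤ R ^ 2 := by
    simp only [EuclideanSpace.norm_sq_eq, Fin.sum_univ_castSucc, toE, Fin.snoc_castSucc,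
      Fin.snoc_last, Real.norm_eq_abs, sq_abs]
    calc ∑ j, ξ j ^ 2 + 0 ^ 2 ≤ ∑ j, a j * R ^ 2 := by
          simpa using Finset.sum_le_sum fun j _ => hterm j
      _ = R ^ 2 := by rw [← Finset.sum_mul, hsum, one_mul]
  exact (pow_le_pow_iff_left₀ (norm_nonneg _) hR two_ne_zero).mp hsq

theorem nondegeneracy_lemma_general (d : ℕ) (R ε δ : ℝ)
    (hR : 0 < R) (hε : 0 < ε) (hδ : 0 < δ)
    (a : Fin d → ℝ) (ha : ∀ j, 0 < a j) (hsum : ∑ j, a j = 1)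
    (U : Euc (d+1) → ℝ)
    (hUc : ContinuousOn U (closedBall 0 R))
    (hU : IsObstacleSolutionOn d U (ball 0 R))
    (hbdry : ∀ X ∈ sphere (0 : Euc (d+1)) R,
      U X ≤ (X (Fin.last d))^2 / 2
        + δ / 2 * ((∑ j : Fin d, a j * (X (Fin.castSucc j))^2) - (X (Fin.last d))^2) - ε) :
    ∀ ξ : Fin d → ℝ, (∀ j, |ξ j| ≤ ε / (δ * R)) → U (toE (Fin.snoc ξ 0)) = 0 := by
  intro ξ hξ
  have ha₀ : ∀ j, 0 ≤ a j := fun j => (ha j).le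
  have hξ' : ∀ j, |ξ j| * (δ * R) ≤ ε := fun j => (le_div_iff₀ (by positivity)).mp (hξ j)
  have hP : ∀ X ∈ sphere (0 : Euc (d + 1)) R, U X + ε ≤ polynomialSolution d δ a 0 X := by
    intro X hX
    simp only [polynomialSolution, Pi.zero_apply, sub_zero]
    linarith [hbdry X hX]
  have hU₀ : ∀ X ∈ closedBall (0 : Euc (d + 1)) R, 0 ≤ U X := by
    rw [← closure_ball 0 hR.ne'] at hUc ⊢
    exact le_on_closure hU.2.1 continuousOn_const hUc
  have hsingle : ∀ i, EuclideanSpace.single i R ∈ sphere (0 : Euc (d + 1)) R := by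
    simp [abs_of_pos hR]
  -- testing the boundary inequality at the points `R e_i` gives `δ ≤ 1` (so `Q_ξ ≥ 0`) and
  -- `ε ≤ δ a_j R² / 2` (so `(ξ, 0)` lies in the closed ball)
  have hδ₁ : δ ≤ 1 := by
    have := hP _ (hsingle (Fin.last d))
    rw [polynomialSolution_zero_single_last] at this
    nlinarith [hU₀ _ (sphere_subset_closedBall (hsingle (Fin.last d)))]
  have hξR : ∀ j, |ξ j| ≤ a j * R := by
    intro j
    have hPj := hP _ (hsingle (Fin.castSucc j))
    rw [polynomialSolution_zero_single_castSucc] at hPj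
    have hUj := hU₀ _ (sphere_subset_closedBall (hsingle (Fin.castSucc j)))
    refine le_of_mul_le_mul_right ?_ (mul_pos hδ hR)
    nlinarith [hξ' j, mul_pos (mul_pos hδ (ha j)) (mul_pos hR hR)]
  have hZ : toE (Fin.snoc ξ 0) ∈ closedBall (0 : Euc (d + 1)) R :=
    mem_closedBall_zero_iff.mpr (norm_toE_snoc_zero_le ha₀ hsum hR.le hξR)
  have hUQ := hU.le_of_le_on_sphere hUc (harmonicOnSet_polynomialSolution_sub (ξ := ξ) hsum)
    (polynomialSolution_nonneg ha₀ hδ.le hδ₁) fun X hX => by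
      linarith [hP X hX, polynomialSolution_zero_le_add ha₀ hsum hδ.le
        (mem_sphere_zero_iff_norm.mp hX).le hξ']
  exact le_antisymm (by simpa using hUQ _ hZ) (hU₀ _ hZ)

theorem nondegeneracy_lemma (d : ℕ) (hd : 2 ≤ d) (R ε δ : ℝ)
    (hR : 0 < R) (hε : 0 < ε) (hδ : 0 < δ)
    (a : Fin d → ℝ) (ha : ∀ j, 0 < a j) (hsum : ∑ j, a j = 1)
    (U : Euc (d+1) → ℝ)
    (hUc : ContinuousOn U (closedBall 0 R))
    (hU : IsObstacleSolutionOn d U (ball 0 R))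
    (hbdry : ∀ X ∈ sphere (0 : Euc (d+1)) R,
      U X ≤ (X (Fin.last d))^2 / 2
        + δ / 2 * ((∑ j : Fin d, a j * (X (Fin.castSucc j))^2) - (X (Fin.last d))^2) - ε) :
    ∀ ξ : Fin d → ℝ, (∀ j, |ξ j| ≤ ε / (δ * R)) → U (toE (Fin.snoc ξ 0)) = 0 :=
  nondegeneracy_lemma_general d R ε δ hR hε hδ a ha hsum U hUc hU hbdry
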